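/- Let i ≠ j be indices with m_{ij} = −1. Then for every t ∈ ℤ, the element Σ_{m₁, m₂ ≤ −1, m₁+m₂ = −t} x_{α_j}(m₁+1) x_{α_j}(m₂+1) x_{α_i}(−1) of U(𝔫̄) lies in I_{λ_0}. (Equivalently, σ_{ω_i,ν}(R^j_{−1,t}) ∈ I_{λ_0} for every character ν and every t ∈ ℤ.) -/

import Mathlib

/-- The data of a finite-dimensional complex simple Lie algebra `𝔤` of type `A`, `D` or `E`
of rank `l`, recorded through: its Cartan matrix `M`; its set `Δ` of positive roots, each
written via its coordinates in the basis of simple roots (so the `i`-th simple root is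
`Pi.single i 1`); and the affinization `𝔫̄ = 𝔫 ⊗ ℂ[t,t⁻¹]` of the nilpotent subalgebra
`𝔫 = ⊕_{α ∈ Δ} ℂx_α`, where `x α m` stands for `x_α ⊗ t^m`.  The weight lattice `P` is
identified with `ℤ^l` via `λ ↦ (⟨λ, α_j⟩)_j`, so that `⟨λ, α⟩ = ∑_j ⟨λ, α_j⟩ α^j` for a
positive root `α` with simple-root coordinates `α^j`; in particular `⟨λ_i, α⟩ = α^i` and
`⟨α_i, α⟩ = ∑_j m_{ij} α^j`. -/
structure ADEContext where
  /-- the rank -/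
  l : ℕ
  hl : 0 < l
  /-- the Cartan matrix -/
  M : Matrix (Fin l) (Fin l) ℤ
  M_symm : M.IsSymm
  M_diag : ∀ i, M i i = 2
  M_offdiag : ∀ i j, i ≠ j → M i j = 0 ∨ M i j = -1
  M_posdef : (M.map ((↑) : ℤ → ℝ)).PosDef
  /-- the set of positive roots, in simple-root coordinates -/
  Δ : Finset (Fin l → ℤ)
  Δ_nonneg : ∀ α ∈ Δ, ∀ j, 0 ≤ α j
  Δ_ne_zero : ∀ α ∈ Δ, α ≠ 0
  simple_mem : ∀ i : Fin l, (Pi.single i 1 : Fin l → ℤ) ∈ Δ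
  /-- every nonsimple positive root is a positive root plus a simple root -/
  Δ_decomp : ∀ α ∈ Δ, (∀ i : Fin l, α ≠ Pi.single i 1) →
    ∃ β ∈ Δ, ∃ i : Fin l, α = β + Pi.single i 1
  /-- `α_i + α_j` is a root iff `i ≠ j` and `m_{ij} = -1` (simply-laced types) -/
  sum_simple_mem_iff : ∀ i j : Fin l,
    ((Pi.single i 1 + Pi.single j 1 : Fin l → ℤ) ∈ Δ) ↔ (i ≠ j ∧ M i j = -1)
  /-- `2α_i + α_j` is never a root (simply-laced types) -/
  two_simple_add_not_mem : ∀ i j : Fin l,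
    ((2 : ℤ) • (Pi.single i 1 : Fin l → ℤ) + Pi.single j 1) ∉ Δ
  /-- the underlying type of the affinization `𝔫̄ = 𝔫 ⊗ ℂ[t,t⁻¹]` -/
  nbar : Type
  [instLieRing : LieRing nbar]
  [instLieAlgebra : LieAlgebra ℂ nbar]
  /-- `x α m` is the element `x_α ⊗ t^m` of `𝔫̄` -/
  x : (Fin l → ℤ) → ℤ → nbar
  /-- the elements `x_α ⊗ t^m`, `α ∈ Δ`, `m ∈ ℤ`, form a `ℂ`-basis of `𝔫̄` -/
  basis : Module.Basis ({α // α ∈ Δ} × ℤ) ℂ nbar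
  basis_eq : ∀ (α : {α // α ∈ Δ}) (m : ℤ), basis (α, m) = x α.1 m
  /-- the structure constants: `[x_α, x_β] = C_{α,β} x_{α+β}` -/
  C : (Fin l → ℤ) → (Fin l → ℤ) → ℂ
  C_ne_zero : ∀ α ∈ Δ, ∀ β ∈ Δ, α + β ∈ Δ → C α β ≠ 0
  /-- the bracket `[x ⊗ t^m, y ⊗ t^n] = [x,y] ⊗ t^{m+n}` on `𝔫̄` -/
  bracket_x : ∀ α ∈ Δ, ∀ β ∈ Δ, ∀ m n : ℤ,
    ⁅x α m, x β n⁆ = if α + β ∈ Δ then C α β • x (α + β) (m + n) else 0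

attribute [instance] ADEContext.instLieRing ADEContext.instLieAlgebra

namespace ADEContext

variable (ctx : ADEContext)

/-- the universal enveloping algebra `U(𝔫̄)` -/
abbrev U : Type := UniversalEnvelopingAlgebra ℂ ctx.nbar

/-- the element `x_α(m) = x_α ⊗ t^m`, viewed in `U(𝔫̄)` -/
noncomputable def X (α : Fin ctx.l → ℤ) (m : ℤ) : ctx.U :=
  UniversalEnvelopingAlgebra.ι ℂ (ctx.x α m)

/-- the `i`-th simple root `α_i`, in simple-root coordinates -/
def sroot (i : Fin ctx.l) : Fin ctx.l → ℤ := Pi.single i 1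

/-- the left ideal `U(𝔫̄)𝔫̄₊` of `U(𝔫̄)` generated by `𝔫̄₊ = 𝔫 ⊗ ℂ[t]` (equivalently, by the
elements `x_α(m)`, `α ∈ Δ`, `m ≥ 0`, which span `𝔫̄₊`) -/
noncomputable def Uplus : Submodule ctx.U ctx.U :=
  Submodule.span ctx.U {u | ∃ α ∈ ctx.Δ, ∃ m : ℤ, 0 ≤ m ∧ u = ctx.X α m}

/-- the truncated relation `R^j_{-1,t} = ∑_{m₁,m₂ ≤ -1, m₁+m₂=-t} x_{α_j}(m₁)x_{α_j}(m₂)` -/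
noncomputable def R (j : Fin ctx.l) (t : ℤ) : ctx.U :=
  ∑ m ∈ Finset.Icc (1 - t) (-1 : ℤ), ctx.X (ctx.sroot j) m * ctx.X (ctx.sroot j) (-t - m)

/-- the left ideal `J` of `U(𝔫̄)` generated by the `R^j_{-1,t}`, `j = 1, …, l`, `t ≥ 2` -/
noncomputable def Jideal : Submodule ctx.U ctx.U :=
  Submodule.span ctx.U {u | ∃ j : Fin ctx.l, ∃ t : ℤ, 2 ≤ t ∧ u = ctx.R j t}

/-- the left ideal `I_{λ_0} = J + U(𝔫̄)𝔫̄₊` -/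
noncomputable def I0 : Submodule ctx.U ctx.U := ctx.Jideal ⊔ ctx.Uplus

/-- the left ideal `I_{λ_i} = I_{λ_0} + U(𝔫̄)x_{α_i}(-1)`, `i = 1, …, l` -/
noncomputable def Ii (i : Fin ctx.l) : Submodule ctx.U ctx.U :=
  ctx.I0 ⊔ Submodule.span ctx.U {ctx.X (ctx.sroot i) (-1)}

/-- the value `ν(α) = ∏_j ν_j^{α^j}` on `α ∈ Q` of the character `ν : Q → ℂ^×` determined by
`ν(α_j) = ν_j = νu j` -/
def charVal (νu : Fin ctx.l → ℂˣ) (α : Fin ctx.l → ℤ) : ℂ :=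
  (∏ j, (νu j) ^ (α j) : ℂˣ)

end ADEContext

/-!
Write `A m = x_{α_j}(m)`, `B r = x_{α_i}(r)` and `γ = α_j + α_i`. The `A m` commute with each
other and with every `x_γ(k)`, while `A m B r = B r A m + C x_γ(m + r)` with `C = C_{α_j,α_i}`.
Moving `B r` to the left through a sum `∑_{lo ≤ m ≤ hi} A m A(n - m)` with `lo + hi = n` produces
`2C ∑ A m x_γ(n + r - m)`, the reflection `m ↦ n - m` identifying the two halves.

Shifting the index, the given element is such a sum with `n = 2 - t`, times `B(-1)`. Modulo
`U(𝔫̄)𝔫̄₊`, that sum is `R^j_{-1,t-2}`, and the mixed sum it produces is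
`R^j_{-1,t-1} B 0 - B 0 R^j_{-1,t-1} ∈ I_{λ_0}`, by the same computation applied to
`R^j_{-1,t-1}` with `r = 0`.
-/

namespace Finset

theorem sum_Icc_comp_add_right {M : Type*} [AddCommMonoid M] (f : ℤ → M) (a b c : ℤ) :
    ∑ m ∈ Icc a b, f (m + c) = ∑ m ∈ Icc (a + c) (b + c), f m := by
  rw [← map_add_right_Icc, sum_map]
  rfl

theorem sum_Icc_comp_reflect {M : Type*} [AddCommMonoid M] (f : ℤ → M) (a b : ℤ) :
    ∑ m ∈ Icc a b, f (a + b - m) = ∑ m ∈ Icc a b, f m := by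
  refine sum_nbij' (a + b - ·) (a + b - ·) ?_ ?_ ?_ ?_ ?_ <;> intro m hm <;>
    simp only [mem_Icc, sub_sub_cancel] at hm ⊢ <;> omega

theorem sum_mul_mul_reflect_mul_eq {U : Type*} [Ring U] (a g : ℤ → U) (b : U)
    (hb : ∀ m, a m * b = b * a m + g m) (hg : ∀ m n, Commute (g m) (a n)) {lo hi n : ℤ}
    (h : lo + hi = n) :
    (∑ m ∈ Icc lo hi, a m * a (n - m)) * b
      = b * ∑ m ∈ Icc lo hi, a m * a (n - m) + 2 • ∑ m ∈ Icc lo hi, a m * g (n - m) := by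
  have hterm : ∀ m, a m * a (n - m) * b = b * (a m * a (n - m)) + a (n - m) * g m
      + a m * g (n - m) := fun m => by
    rw [mul_assoc, hb, mul_add, ← mul_assoc, hb, add_mul, mul_assoc, (hg _ _).eq]
  have hreflect : ∑ m ∈ Icc lo hi, a (n - m) * g m = ∑ m ∈ Icc lo hi, a m * g (n - m) := by
    subst h
    simpa only [sub_sub_cancel] using sum_Icc_comp_reflect (fun m => a m * g (lo + hi - m)) lo hi
  simp only [sum_mul, hterm, sum_add_distrib, mul_sum, hreflect, two_nsmul, add_assoc]

theorem sum_sub_sum_filter_mem {R M ι : Type*} [Ring R] [AddCommGroup M] [Module R M]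
    {N : Submodule R M} (s : Finset ι) (p : ι → Prop) [DecidablePred p] {f : ι → M}
    (hf : ∀ i ∈ s, ¬ p i → f i ∈ N) :
    ∑ i ∈ s, f i - ∑ i ∈ s with p i, f i ∈ N := by
  rw [← sum_filter_add_sum_filter_not s p, add_sub_cancel_left]
  exact N.sum_mem fun i hi => hf i (mem_filter.1 hi).1 (mem_filter.1 hi).2

end Finset

namespace ADEContext

variable (ctx : ADEContext)

attribute [local instance] LieRing.ofAssociativeRing LieAlgebra.ofAssociativeAlgebra

theorem X_mul_X_sub_X_mul_X (α β : Fin ctx.l → ℤ) (m n : ℤ) :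
    ctx.X α m * ctx.X β n - ctx.X β n * ctx.X α m
      = UniversalEnvelopingAlgebra.ι ℂ ⁅ctx.x α m, ctx.x β n⁆ := by
  rw [LieHom.map_lie, Ring.lie_def]
  rfl

theorem commute_X_of_add_not_mem {α β : Fin ctx.l → ℤ} (hα : α ∈ ctx.Δ) (hβ : β ∈ ctx.Δ)
    (h : α + β ∉ ctx.Δ) (m n : ℤ) : Commute (ctx.X α m) (ctx.X β n) := by
  rw [Commute, SemiconjBy, ← sub_eq_zero, X_mul_X_sub_X_mul_X, ctx.bracket_x α hα β hβ,
    if_neg h, map_zero]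

theorem X_mul_X_of_add_mem {α β : Fin ctx.l → ℤ} (hα : α ∈ ctx.Δ) (hβ : β ∈ ctx.Δ)
    (h : α + β ∈ ctx.Δ) (m n : ℤ) :
    ctx.X α m * ctx.X β n = ctx.X β n * ctx.X α m + ctx.C α β • ctx.X (α + β) (m + n) := by
  rw [← sub_eq_iff_eq_add', X_mul_X_sub_X_mul_X, ctx.bracket_x α hα β hβ, if_pos h, map_smul]
  rfl

theorem commute_X_sroot_self (j : Fin ctx.l) (m n : ℤ) :
    Commute (ctx.X (ctx.sroot j) m) (ctx.X (ctx.sroot j) n) :=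
  ctx.commute_X_of_add_not_mem (ctx.simple_mem j) (ctx.simple_mem j)
    (fun h => ((ctx.sum_simple_mem_iff j j).1 h).1 rfl) m n

section Adjacent

variable {ctx} {i j : Fin ctx.l}

theorem sroot_add_sroot_mem (hij : i ≠ j) (hM : ctx.M i j = -1) :
    ctx.sroot j + ctx.sroot i ∈ ctx.Δ :=
  (ctx.sum_simple_mem_iff j i).2 ⟨hij.symm, (ctx.M_symm.apply i j).trans hM⟩

theorem commute_X_sroot_X_sroot_add (hij : i ≠ j) (hM : ctx.M i j = -1) (m n : ℤ) :
    Commute (ctx.X (ctx.sroot j) m) (ctx.X (ctx.sroot j + ctx.sroot i) n) := by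
  refine ctx.commute_X_of_add_not_mem (ctx.simple_mem j) (sroot_add_sroot_mem hij hM) ?_ m n
  convert ctx.two_simple_add_not_mem j i using 1
  rw [two_smul, add_assoc]
  rfl

theorem X_sroot_mul_X_sroot (hij : i ≠ j) (hM : ctx.M i j = -1) (m n : ℤ) :
    ctx.X (ctx.sroot j) m * ctx.X (ctx.sroot i) n = ctx.X (ctx.sroot i) n * ctx.X (ctx.sroot j) m
      + ctx.C (ctx.sroot j) (ctx.sroot i) • ctx.X (ctx.sroot j + ctx.sroot i) (m + n) :=
  ctx.X_mul_X_of_add_mem (ctx.simple_mem j) (ctx.simple_mem i) (sroot_add_sroot_mem hij hM) m n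

end Adjacent

/-- `∑_{lo ≤ m ≤ hi} x_{α_j}(m) x_{α_j}(n - m)`; `R j t` is `pairSum j (1 - t) (-1) (-t)`. -/
noncomputable def pairSum (j : Fin ctx.l) (lo hi n : ℤ) : ctx.U :=
  ∑ m ∈ Finset.Icc lo hi, ctx.X (ctx.sroot j) m * ctx.X (ctx.sroot j) (n - m)

noncomputable def mixedSum (i j : Fin ctx.l) (lo hi n : ℤ) : ctx.U :=
  ∑ m ∈ Finset.Icc lo hi, ctx.X (ctx.sroot j) m * ctx.X (ctx.sroot j + ctx.sroot i) (n - m)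

theorem pairSum_mul_X_sroot {i j : Fin ctx.l} (hij : i ≠ j) (hM : ctx.M i j = -1)
    {lo hi n : ℤ} (h : lo + hi = n) (r : ℤ) :
    ctx.pairSum j lo hi n * ctx.X (ctx.sroot i) r = ctx.X (ctx.sroot i) r * ctx.pairSum j lo hi n
      + (2 * ctx.C (ctx.sroot j) (ctx.sroot i)) • ctx.mixedSum i j lo hi (n + r) := by
  rw [pairSum, Finset.sum_mul_mul_reflect_mul_eq _
    (fun m => ctx.C (ctx.sroot j) (ctx.sroot i) • ctx.X (ctx.sroot j + ctx.sroot i) (m + r))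
    _ (fun m => X_sroot_mul_X_sroot hij hM m r)
    (fun m n => ((commute_X_sroot_X_sroot_add hij hM n _).smul_right _).symm) h]
  simp only [mixedSum, mul_smul, Finset.smul_sum, mul_smul_comm, two_smul, sub_add_eq_add_sub]

theorem sum_shifted_eq_pairSum (j : Fin ctx.l) (t : ℤ) :
    ∑ m ∈ Finset.Icc (1 - t) (-1 : ℤ),
        ctx.X (ctx.sroot j) (m + 1) * ctx.X (ctx.sroot j) (-t - m + 1)
      = ctx.pairSum j (2 - t) 0 (2 - t) := by
  rw [pairSum]
  convert Finset.sum_Icc_comp_add_right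
    (fun m => ctx.X (ctx.sroot j) m * ctx.X (ctx.sroot j) (2 - t - m)) (1 - t) (-1) 1 using 4
    <;> ring

theorem R_sub_one_eq_pairSum (j : Fin ctx.l) (t : ℤ) :
    ctx.R j (t - 1) = ctx.pairSum j (2 - t) (-1) (1 - t) := by
  rw [R, pairSum]
  congr 1 <;> ring_nf

theorem mul_X_mem_Uplus (u : ctx.U) {α : Fin ctx.l → ℤ} (hα : α ∈ ctx.Δ) {m : ℤ} (hm : 0 ≤ m) :
    u * ctx.X α m ∈ ctx.Uplus :=
  ctx.Uplus.smul_mem u (Submodule.subset_span ⟨α, hα, m, hm, rfl⟩)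

theorem R_mem_Jideal (j : Fin ctx.l) (t : ℤ) : ctx.R j t ∈ ctx.Jideal := by
  rcases le_or_gt 2 t with h | h
  · exact Submodule.subset_span ⟨j, t, h, rfl⟩
  · rw [R, Finset.Icc_eq_empty (by omega), Finset.sum_empty]
    exact zero_mem _

theorem pairSum_sub_R_mem_Uplus (j : Fin ctx.l) (t : ℤ) :
    ctx.pairSum j (2 - t) 0 (2 - t) - ctx.R j (t - 2) ∈ ctx.Uplus := by
  have hfilter : {m ∈ Finset.Icc (2 - t) 0 | m ≤ -1 ∧ 2 - t - m ≤ -1}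
      = Finset.Icc (1 - (t - 2)) (-1) := by
    ext m
    simp only [Finset.mem_filter, Finset.mem_Icc]
    omega
  have hR : ctx.R j (t - 2) = ∑ m ∈ Finset.Icc (1 - (t - 2)) (-1),
      ctx.X (ctx.sroot j) m * ctx.X (ctx.sroot j) (2 - t - m) := by
    simp only [R, neg_sub]
  rw [pairSum, hR, ← hfilter]
  refine Finset.sum_sub_sum_filter_mem _ _ fun m _ hm => ?_
  rcases le_or_gt 0 m with hm0 | hm0
  · rw [(ctx.commute_X_sroot_self j _ _).eq]
    exact ctx.mul_X_mem_Uplus _ (ctx.simple_mem j) hm0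
  · exact ctx.mul_X_mem_Uplus _ (ctx.simple_mem j) (by omega)

theorem mixedSum_sub_mem_Uplus {i j : Fin ctx.l} (hij : i ≠ j) (hM : ctx.M i j = -1)
    (lo n : ℤ) : ctx.mixedSum i j lo 0 n - ctx.mixedSum i j lo (-1) n ∈ ctx.Uplus := by
  have hfilter : {m ∈ Finset.Icc lo 0 | m ≤ -1} = Finset.Icc lo (-1) := by
    ext m
    simp only [Finset.mem_filter, Finset.mem_Icc]
    omega
  rw [mixedSum, mixedSum, ← hfilter]
  refine Finset.sum_sub_sum_filter_mem _ _ fun m _ hm => ?_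
  rw [(commute_X_sroot_X_sroot_add hij hM _ _).eq]
  exact ctx.mul_X_mem_Uplus _ (ctx.simple_mem j) (by omega)

end ADEContext

/-- Let `i ≠ j` be indices with `m_{ij} = -1`.  Then for every `t ∈ ℤ`, the element
`∑_{m₁,m₂ ≤ -1, m₁+m₂=-t} x_{α_j}(m₁+1) x_{α_j}(m₂+1) x_{α_i}(-1)` of `U(𝔫̄)` lies in
`I_{λ_0}`. -/
theorem shifted_relation_mul_mem_I0 (ctx : ADEContext) (i j : Fin ctx.l) (hij : i ≠ j)
    (hM : ctx.M i j = -1) (t : ℤ) :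
    ∑ m ∈ Finset.Icc (1 - t) (-1 : ℤ),
        ctx.X (ctx.sroot j) (m + 1) * ctx.X (ctx.sroot j) (-t - m + 1)
          * ctx.X (ctx.sroot i) (-1) ∈ ctx.I0 := by
  set B := ctx.X (ctx.sroot i)
  set c := 2 * ctx.C (ctx.sroot j) (ctx.sroot i)
  have hR_comm := ctx.pairSum_mul_X_sroot hij hM (lo := 2 - t) (hi := -1) (n := 1 - t) (by ring) 0
  rw [← ctx.R_sub_one_eq_pairSum, add_zero] at hR_comm
  rw [← Finset.sum_mul, ctx.sum_shifted_eq_pairSum, ctx.pairSum_mul_X_sroot hij hM (by ring),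
    show 2 - t + -1 = 1 - t by ring]
  have hsplit : B (-1) * ctx.pairSum j (2 - t) 0 (2 - t) + c • ctx.mixedSum i j (2 - t) 0 (1 - t)
      = B (-1) * (ctx.pairSum j (2 - t) 0 (2 - t) - ctx.R j (t - 2)) + B (-1) * ctx.R j (t - 2)
        + c • (ctx.mixedSum i j (2 - t) 0 (1 - t) - ctx.mixedSum i j (2 - t) (-1) (1 - t))
        + (ctx.R j (t - 1) * B 0 - B 0 * ctx.R j (t - 1)) := by
    rw [hR_comm, mul_sub, smul_sub]
    abel
  rw [hsplit]
  refine add_mem (add_mem (add_mem ?_ ?_) ?_) (sub_mem ?_ ?_)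
  · exact Submodule.mem_sup_right (ctx.Uplus.smul_mem _ (ctx.pairSum_sub_R_mem_Uplus j t))
  · exact Submodule.mem_sup_left (ctx.Jideal.smul_mem _ (ctx.R_mem_Jideal j _))
  · exact Submodule.smul_of_tower_mem _ c
      (Submodule.mem_sup_right (ctx.mixedSum_sub_mem_Uplus hij hM _ _))
  · exact Submodule.mem_sup_right (ctx.mul_X_mem_Uplus _ (ctx.simple_mem i) le_rfl)
  · exact Submodule.mem_sup_left (ctx.Jideal.smul_mem _ (ctx.R_mem_Jideal j _))
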